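/- Consider the equations (eq-g) with the nonholonomic angular velocity ω = A_γM, where A = diag(a1,a2,a3) has pairwise distinct nonzero entries and d > 0, with α = 0, V = 0, C = diag(c1,c2,c3) diagonal satisfying the Clebsch-type condition (c2 − c3)/a1 + (c3 − c1)/a2 + (c1 − c2)/a3 = 0, and B = ((a2c2 − a3c3)/(a2 − a3))·E proportional to the identity matrix. Then the square of the angular momentum M² = (M,M) is a first integral of (eq-g) on the domain g > 0. -/

import Mathlib

noncomputable section

/-- ℝ³ as a phase-space component. -/
abbrev V3 := Fin 3 → ℝ

/-- Cross product on ℝ³. -/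
def cross3 (a b : V3) : V3 :=
  ![a 1 * b 2 - a 2 * b 1, a 2 * b 0 - a 0 * b 2, a 0 * b 1 - a 1 * b 0]

/-- Euclidean inner product on ℝ³. -/
def dot3 (a b : V3) : ℝ := a 0 * b 0 + a 1 * b 1 + a 2 * b 2

/-- Partial derivative of a scalar function on ℝ³ in the `i`-th coordinate direction. -/
def pd3 (f : V3 → ℝ) (γ : V3) (i : Fin 3) : ℝ := fderiv ℝ f γ (Pi.single i 1)

/-- Gradient of a scalar function on ℝ³. -/
def grad3 (V : V3 → ℝ) (γ : V3) : V3 := fun i => pd3 V γ i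

/-- Curl (rot) of a vector field on ℝ³. -/
def curl3 (b : V3 → V3) (γ : V3) : V3 :=
  ![pd3 (fun x => b x 2) γ 1 - pd3 (fun x => b x 1) γ 2,
    pd3 (fun x => b x 0) γ 2 - pd3 (fun x => b x 2) γ 0,
    pd3 (fun x => b x 1) γ 0 - pd3 (fun x => b x 0) γ 1]

/-- Divergence of a vector field on ℝ³. -/
def div3 (F : V3 → V3) (γ : V3) : ℝ := ∑ i : Fin 3, pd3 (fun x => F x i) γ i

/-- Action of the diagonal matrix `A = diag (a 0, a 1, a 2)` on a vector. -/
def dvec (a x : V3) : V3 := fun i => a i * x i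

/-- Nonholonomic angular velocity of the Chaplygin sphere:
`ω = A_γ M = A M + d (γ, A M) g⁻² A γ`, with `g² = 1 - d (γ, A γ)`. -/
def omegaCh (a : V3) (d : ℝ) (γ M : V3) : V3 :=
  fun i => a i * M i + d * dot3 γ (dvec a M) * (1 - d * dot3 γ (dvec a γ))⁻¹ * (a i * γ i)

/-- The function `g(γ) = √(1 - d (γ, A γ))`. -/
def gfun (a : V3) (d : ℝ) (γ : V3) : ℝ := Real.sqrt (1 - d * dot3 γ (dvec a γ))

/-- Total mechanical energy of the Chaplygin sphere: `H = ½ (M, A_γ M) + V(γ)`. -/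
def Hch (a : V3) (d : ℝ) (V : V3 → ℝ) (p : V3 × V3) : ℝ :=
  (1 / 2) * dot3 p.2 (omegaCh a d p.1 p.2) + V p.1

/-- Divergence of a vector field on the phase space ℝ³ × ℝ³ ∋ (γ, M). -/
def divPhase (X : V3 × V3 → V3 × V3) (p : V3 × V3) : ℝ :=
  (∑ i : Fin 3, fderiv ℝ (fun q => (X q).1 i) p (Pi.single i 1, (0 : V3))) +
  (∑ i : Fin 3, fderiv ℝ (fun q => (X q).2 i) p ((0 : V3), Pi.single i 1))

/-- The totally antisymmetric symbol `ε_{ijk}` with `ε_{123} = 1`. -/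
def eps (i j k : Fin 3) : ℝ :=
  (((i : ℕ) : ℝ) - ((j : ℕ) : ℝ)) * (((j : ℕ) : ℝ) - ((k : ℕ) : ℝ)) *
    (((k : ℕ) : ℝ) - ((i : ℕ) : ℝ)) / 2

/-- Standard basis vectors of the phase space ℝ³ × ℝ³, indexed by `Fin 3 ⊕ Fin 3`
(`inl` = γ-coordinates, `inr` = M-coordinates). -/
def bvec : Fin 3 ⊕ Fin 3 → V3 × V3
  | Sum.inl i => (Pi.single i 1, 0)
  | Sum.inr i => (0, Pi.single i 1)

/-- The vector field of equations (eq-g):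
`γ̇ = γ×ω`, `Ṁ = (M + Bγ + α)×ω + (Cω − ∇V(γ))×γ`. -/
def Xeqg (B C : Matrix (Fin 3) (Fin 3) ℝ) (α : V3) (V : V3 → ℝ)
    (ω : V3 × V3 → V3) (p : V3 × V3) : V3 × V3 :=
  (cross3 p.1 (ω p),
   cross3 (p.2 + B.mulVec p.1 + α) (ω p) + cross3 (C.mulVec (ω p) - grad3 V p.1) p.1)

/-- The bivector `P_φ`: `{γ_i,γ_j} = 0`, `{M_i,γ_j} = ε_{ijk}γ_k`,
`{M_i,M_j} = ε_{ijk}(M_k + b_k(γ))`. -/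
def Pphi (b : V3 → V3) (p : V3 × V3) (r s : Fin 3 ⊕ Fin 3) : ℝ :=
  match r, s with
  | Sum.inl _, Sum.inl _ => 0
  | Sum.inr i, Sum.inl j => ∑ k, eps i j k * p.1 k
  | Sum.inl i, Sum.inr j => -(∑ k, eps j i k * p.1 k)
  | Sum.inr i, Sum.inr j => ∑ k, eps i j k * (p.2 k + b p.1 k)

/-- The bivector `P_{ψφ}`: `{γ_i,γ_j} = 0`, `{M_i,γ_j} = g ε_{ijk}γ_k`,
`{M_i,M_j} = g ε_{ijk}(M_k + b_k(γ)) − (d/g)(M, Aγ) ε_{ijk}γ_k`. -/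
def Ppsiphi (a : V3) (d : ℝ) (b : V3 → V3) (p : V3 × V3) (r s : Fin 3 ⊕ Fin 3) : ℝ :=
  match r, s with
  | Sum.inl _, Sum.inl _ => 0
  | Sum.inr i, Sum.inl j => gfun a d p.1 * ∑ k, eps i j k * p.1 k
  | Sum.inl i, Sum.inr j => -(gfun a d p.1 * ∑ k, eps j i k * p.1 k)
  | Sum.inr i, Sum.inr j =>
      gfun a d p.1 * (∑ k, eps i j k * (p.2 k + b p.1 k)) -
        d / gfun a d p.1 * dot3 p.2 (dvec a p.1) * ∑ k, eps i j k * p.1 k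

/-- The Jacobi identity expression
`Σ_l (P_{li} ∂_l P_{jk} + P_{lj} ∂_l P_{ki} + P_{lk} ∂_l P_{ij})` at a point. -/
def jacobiAt (P : V3 × V3 → (Fin 3 ⊕ Fin 3) → (Fin 3 ⊕ Fin 3) → ℝ)
    (p : V3 × V3) (i j k : Fin 3 ⊕ Fin 3) : ℝ :=
  ∑ l : Fin 3 ⊕ Fin 3,
    (P p l i * fderiv ℝ (fun q => P q j k) p (bvec l) +
     P p l j * fderiv ℝ (fun q => P q k i) p (bvec l) +
     P p l k * fderiv ℝ (fun q => P q i j) p (bvec l))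

/-- The `s`-component `{H, x_s} = Σ_r ∂H/∂x_r P_{r s}` of the Hamiltonian vector field
generated by `H` and the bivector `P`. -/
def hamVF (P : V3 × V3 → (Fin 3 ⊕ Fin 3) → (Fin 3 ⊕ Fin 3) → ℝ)
    (H : V3 × V3 → ℝ) (p : V3 × V3) (s : Fin 3 ⊕ Fin 3) : ℝ :=
  ∑ r : Fin 3 ⊕ Fin 3, fderiv ℝ H p (bvec r) * P p r s

/-! With `B = βE` the momentum equation reads `Ṁ = M × ω + γ × (βE − C)ω`. For
`β = (a₂c₂ − a₃c₃)/(a₂ − a₃)` the Clebsch condition says exactly that `(βE − C)A = κE` is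
scalar. Since `ω = A(M + μγ)` for a scalar `μ`, this gives `(βE − C)ω = κ(M + μγ)`, hence
`Ṁ = M × (ω − κγ)`: the momentum only rotates, and `(M, M)` is conserved. The paper's
indices `1, 2, 3` are `0, 1, 2` in the code. -/

open Matrix

theorem cross3_eq_crossProduct (x y : V3) : cross3 x y = x ⨯₃ y := rfl

theorem dot3_eq_dotProduct (x y : V3) : dot3 x y = x ⬝ᵥ y := by
  simp [dot3, dotProduct, Fin.sum_univ_three]

theorem HasDerivAt.dotProduct {𝕜 ι : Type*} [NontriviallyNormedField 𝕜] [Fintype ι]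
    {x y : 𝕜 → ι → 𝕜} {x' y' : ι → 𝕜} {t : 𝕜}
    (hx : HasDerivAt x x' t) (hy : HasDerivAt y y' t) :
    HasDerivAt (fun s => x s ⬝ᵥ y s) (x' ⬝ᵥ y t + x t ⬝ᵥ y') t := by
  unfold _root_.dotProduct
  rw [← Finset.sum_add_distrib]
  exact HasDerivAt.fun_sum fun i _ => (hasDerivAt_pi.mp hx i).mul (hasDerivAt_pi.mp hy i)

theorem grad3_const (r : ℝ) (γ : V3) : grad3 (fun _ => r) γ = 0 := by
  ext i
  simp [grad3, pd3]

theorem omegaCh_eq_dvec (a : V3) (d : ℝ) (γ M : V3) :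
    omegaCh a d γ M =
      dvec a (M + (d * dot3 γ (dvec a M) * (1 - d * dot3 γ (dvec a γ))⁻¹) • γ) := by
  ext i
  simp only [omegaCh, dvec, Pi.add_apply, Pi.smul_apply, smul_eq_mul]
  ring

theorem smul_dvec_sub_diagonal_mulVec_dvec {a c : V3} {β κ : ℝ}
    (hκ : ∀ i, (β - c i) * a i = κ) (u : V3) :
    β • dvec a u - diagonal c *ᵥ dvec a u = κ • u := by
  ext i
  simp only [dvec, Pi.sub_apply, Pi.smul_apply, smul_eq_mul, mulVec_diagonal]
  linear_combination u i * hκ i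

theorem sub_mul_eq_of_clebsch {a c : V3} (ha : ∀ i, a i ≠ 0) (h12 : a 1 ≠ a 2)
    (hcleb : (c 1 - c 2) / a 0 + (c 2 - c 0) / a 1 + (c 0 - c 1) / a 2 = 0) (i : Fin 3) :
    ((a 1 * c 1 - a 2 * c 2) / (a 1 - a 2) - c i) * a i =
      a 1 * a 2 * (c 1 - c 2) / (a 1 - a 2) := by
  have h12' : a 1 - a 2 ≠ 0 := sub_ne_zero.mpr h12
  field_simp [ha 0, ha 1, ha 2] at hcleb
  fin_cases i <;> dsimp <;> field_simp
  · linear_combination -hcleb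
  · ring
  · ring

theorem Xeqg_snd_eq_cross {a c : V3} {β κ : ℝ} (hκ : ∀ i, (β - c i) * a i = κ)
    (d : ℝ) (γ M : V3) :
    (Xeqg (β • 1) (diagonal c) 0 (fun _ => 0) (fun q => omegaCh a d q.1 q.2) (γ, M)).2 =
      M ⨯₃ (omegaCh a d γ M - κ • γ) := by
  obtain ⟨u, μ, hu, hω⟩ : ∃ u μ, u = M + μ • γ ∧ omegaCh a d γ M = dvec a u :=
    ⟨_, _, rfl, omegaCh_eq_dvec a d γ M⟩
  simp only [Xeqg, grad3_const, sub_zero, add_zero, smul_mulVec, one_mulVec,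
    cross3_eq_crossProduct]
  calc (M + β • γ) ⨯₃ omegaCh a d γ M + (diagonal c *ᵥ omegaCh a d γ M) ⨯₃ γ
      = M ⨯₃ omegaCh a d γ M +
          γ ⨯₃ (β • omegaCh a d γ M - diagonal c *ᵥ omegaCh a d γ M) := by
        simp only [map_add, map_sub, map_smul, LinearMap.add_apply, LinearMap.smul_apply,
          ← cross_anticomm (diagonal c *ᵥ _)]
        abel
    _ = M ⨯₃ omegaCh a d γ M + γ ⨯₃ (κ • (M + μ • γ)) := by
        rw [hω, smul_dvec_sub_diagonal_mulVec_dvec hκ, hu]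
    _ = M ⨯₃ (omegaCh a d γ M - κ • γ) := by
        simp only [map_add, map_sub, map_smul, cross_self, smul_zero, add_zero,
          ← cross_anticomm M γ]
        module

theorem eqg_nonholonomic_momentum_square_first_integral_general
    (a c : V3) (h12 : a 1 ≠ a 2)
    (ha : ∀ i, a i ≠ 0) (d : ℝ)
    (hcleb : (c 1 - c 2) / a 0 + (c 2 - c 0) / a 1 + (c 0 - c 1) / a 2 = 0)
    (B C : Matrix (Fin 3) (Fin 3) ℝ)
    (hC : C = Matrix.diagonal c)
    (hB : B = ((a 1 * c 1 - a 2 * c 2) / (a 1 - a 2)) • (1 : Matrix (Fin 3) (Fin 3) ℝ))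
    (γ M : ℝ → V3)
    (hM : ∀ t : ℝ, HasDerivAt M
      ((Xeqg B C 0 (fun _ => 0) (fun q => omegaCh a d q.1 q.2) (γ t, M t)).2) t)
    (t : ℝ) :
    HasDerivAt (fun s => dot3 (M s) (M s)) 0 t := by
  subst hB hC
  have hsq := (hM t).dotProduct (hM t)
  rw [Xeqg_snd_eq_cross (sub_mul_eq_of_clebsch ha h12 hcleb)] at hsq
  simpa only [dot3_eq_dotProduct, dotProduct_comm _ (M t), dot_self_cross, add_zero] using hsq

/-- For (eq-g) with the nonholonomic angular velocity `ω = A_γM`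
(pairwise distinct nonzero `a_i`, `d > 0`), `α = 0`, `V = 0`, `C = diag(c1,c2,c3)`
satisfying the Clebsch-type condition `(c2 − c3)/a1 + (c3 − c1)/a2 + (c1 − c2)/a3 = 0`,
and `B = ((a2c2 − a3c3)/(a2 − a3))·E`, the square of the angular momentum `M² = (M,M)`
is a first integral on the domain `g > 0`. -/
theorem eqg_nonholonomic_momentum_square_first_integral
    (a c : V3) (h01 : a 0 ≠ a 1) (h02 : a 0 ≠ a 2) (h12 : a 1 ≠ a 2)
    (ha : ∀ i, a i ≠ 0) (d : ℝ) (hd : 0 < d)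
    (hcleb : (c 1 - c 2) / a 0 + (c 2 - c 0) / a 1 + (c 0 - c 1) / a 2 = 0)
    (B C : Matrix (Fin 3) (Fin 3) ℝ)
    (hC : C = Matrix.diagonal c)
    (hB : B = ((a 1 * c 1 - a 2 * c 2) / (a 1 - a 2)) • (1 : Matrix (Fin 3) (Fin 3) ℝ))
    (γ M : ℝ → V3)
    (hdom : ∀ t : ℝ, 0 < 1 - d * dot3 (γ t) (dvec a (γ t)))
    (hγ : ∀ t : ℝ, HasDerivAt γ
      ((Xeqg B C 0 (fun _ => 0) (fun q => omegaCh a d q.1 q.2) (γ t, M t)).1) t)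
    (hM : ∀ t : ℝ, HasDerivAt M
      ((Xeqg B C 0 (fun _ => 0) (fun q => omegaCh a d q.1 q.2) (γ t, M t)).2) t)
    (t : ℝ) :
    HasDerivAt (fun s => dot3 (M s) (M s)) 0 t :=
  eqg_nonholonomic_momentum_square_first_integral_general a c h12 ha d hcleb B C hC hB γ M hM t
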